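/- Let x_1, …, x_n ∈ ℝ^m and suppose there exist reals 0 < σ ≤ Σ such that σ·‖w‖ ≤ ‖Σ_{i=1}^n w_i x_i‖ ≤ Σ·‖w‖ for every w ∈ ℝ^n. Define the column subset selection objective f(S) = Σ_{j=1}^n dist(x_j, span{x_i : i ∈ S})². Then for every j ∈ Fin n and all S, T ⊆ Fin n \ {j}, f(S) − f(S ∪ {j}) ≥ (σ²/Σ²) · ( f(T) − f(T ∪ {j}) ). -/

import Mathlib

/-!
Let `r` be the component of `x j` orthogonal to `K = span {x i | i ∈ S}`. Adjoining `x j` to `K`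
is the same as adjoining `r`, which lowers every squared distance `dist (x k, K)²` by
`⟪r, x k⟫² / ‖r‖²`; so the marginal gain is the Rayleigh quotient `‖Xᵀ r‖² / ‖r‖²` (and `0` when
`r = 0`, thanks to `a / 0 = 0`). This quotient is at most `σ₂²` for every `r`. When `j ∉ S` the
columns are independent, so `r ≠ 0`, and `r = X c` lies in the column span; then
`‖r‖² = ⟪c, Xᵀ r⟫ ≤ ‖c‖ ‖Xᵀ r‖` and `σ₁ ‖c‖ ≤ ‖r‖` bound the quotient below by `σ₁²`.
-/

open Metric Submodule
open scoped RealInnerProductSpace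

namespace Submodule

variable {E : Type*} [NormedAddCommGroup E] [InnerProductSpace ℝ E]

theorem infDist_eq_norm_sub_starProjection (K : Submodule ℝ E) [K.HasOrthogonalProjection]
    (y : E) : infDist y (K : Set E) = ‖y - K.starProjection y‖ := by
  rw [infDist_eq_iInf, starProjection_minimal]
  simp only [dist_eq_norm]
  rfl

theorem infDist_sq_eq_norm_sq_sub_norm_sq_starProjection (K : Submodule ℝ E)
    [K.HasOrthogonalProjection] (y : E) :
    infDist y (K : Set E) ^ 2 = ‖y‖ ^ 2 - ‖K.starProjection y‖ ^ 2 := by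
  rw [infDist_eq_norm_sub_starProjection, norm_sq_eq_add_norm_sq_starProjection y K,
    starProjection_orthogonal_val]
  ring

theorem IsOrtho.starProjection_sup {U V : Submodule ℝ E} [U.HasOrthogonalProjection]
    [V.HasOrthogonalProjection] [(U ⊔ V).HasOrthogonalProjection] (h : U ⟂ V) (y : E) :
    (U ⊔ V).starProjection y = U.starProjection y + V.starProjection y := by
  refine eq_starProjection_of_mem_of_inner_eq_zero
    (add_mem_sup (starProjection_apply_mem U y) (starProjection_apply_mem V y)) ?_
  rintro _ hw
  obtain ⟨u, hu, v, hv, rfl⟩ := mem_sup.mp hw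
  have hUu : ⟪y - U.starProjection y, u⟫ = 0 :=
    inner_left_of_mem_orthogonal hu (sub_starProjection_mem_orthogonal y)
  have hVv : ⟪y - V.starProjection y, v⟫ = 0 :=
    inner_left_of_mem_orthogonal hv (sub_starProjection_mem_orthogonal y)
  have hVu : ⟪V.starProjection y, u⟫ = 0 := h.symm.inner_eq (starProjection_apply_mem V y) hu
  have hUv : ⟪U.starProjection y, v⟫ = 0 := h.inner_eq (starProjection_apply_mem U y) hv
  have hsplit : y - (U.starProjection y + V.starProjection y)
      = (y - U.starProjection y) - V.starProjection y := by abel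
  have hsplit' : y - (U.starProjection y + V.starProjection y)
      = (y - V.starProjection y) - U.starProjection y := by abel
  rw [inner_add_right, hsplit, inner_sub_left, hUu, hVu, ← hsplit, hsplit', inner_sub_left,
    hVv, hUv]
  simp

theorem IsOrtho.infDist_sq_sup {U V : Submodule ℝ E} [U.HasOrthogonalProjection]
    [V.HasOrthogonalProjection] [(U ⊔ V).HasOrthogonalProjection] (h : U ⟂ V) (y : E) :
    infDist y ((U ⊔ V : Submodule ℝ E) : Set E) ^ 2
      = infDist y (U : Set E) ^ 2 - ‖V.starProjection y‖ ^ 2 := by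
  have hUV : ⟪U.starProjection y, V.starProjection y⟫ = 0 :=
    h.inner_eq (starProjection_apply_mem U y) (starProjection_apply_mem V y)
  rw [infDist_sq_eq_norm_sq_sub_norm_sq_starProjection, h.starProjection_sup,
    infDist_sq_eq_norm_sq_sub_norm_sq_starProjection, sq, sq, sq,
    norm_add_sq_eq_norm_sq_add_norm_sq_of_inner_eq_zero _ _ hUV]
  ring

theorem norm_sq_starProjection_span_singleton (v y : E) :
    ‖(ℝ ∙ v).starProjection y‖ ^ 2 = ⟪v, y⟫ ^ 2 / ‖v‖ ^ 2 := by
  rcases eq_or_ne v 0 with rfl | hv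
  · simp
  rw [starProjection_singleton, RCLike.ofReal_real_eq_id, id_eq, norm_smul, Real.norm_eq_abs,
    mul_pow, sq_abs]
  field_simp

theorem sup_span_singleton_sub_of_mem {K : Submodule ℝ E} {k : E} (hk : k ∈ K) (v : E) :
    K ⊔ (ℝ ∙ (v - k)) = K ⊔ (ℝ ∙ v) := by
  refine le_antisymm (sup_le le_sup_left ?_) (sup_le le_sup_left ?_) <;>
    rw [span_singleton_le_iff_mem]
  · exact sub_mem (mem_sup_right (mem_span_singleton_self v)) (mem_sup_left hk)
  · simpa using add_mem (mem_sup_right (mem_span_singleton_self (v - k))) (mem_sup_left hk)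

theorem infDist_sq_sup_span_singleton (K : Submodule ℝ E) [K.HasOrthogonalProjection] (v : E)
    [(K ⊔ (ℝ ∙ v)).HasOrthogonalProjection] (y : E) :
    infDist y ((K ⊔ (ℝ ∙ v) : Submodule ℝ E) : Set E) ^ 2
      = infDist y (K : Set E) ^ 2
        - ⟪v - K.starProjection v, y⟫ ^ 2 / ‖v - K.starProjection v‖ ^ 2 := by
  have hsup := sup_span_singleton_sub_of_mem (starProjection_apply_mem K v) v
  have : (K ⊔ (ℝ ∙ (v - K.starProjection v))).HasOrthogonalProjection := hsup ▸ ‹_›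
  have hortho : K ⟂ (ℝ ∙ (v - K.starProjection v)) := (isOrtho_iff_le.2 <|
    (span_singleton_le_iff_mem _ _).2 (sub_starProjection_mem_orthogonal v)).symm
  rw [← hsup, hortho.infDist_sq_sup, norm_sq_starProjection_span_singleton]

end Submodule

section FrameBounds

variable {ι E : Type*} [Fintype ι] [NormedAddCommGroup E] [InnerProductSpace ℝ E] (x : ι → E)

theorem sum_inner_sq_le_of_norm_sum_smul_le {C : ℝ}
    (h : ∀ w : ι → ℝ, ‖∑ i, w i • x i‖ ≤ C * √(∑ i, w i ^ 2)) (r : E) :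
    ∑ i, ⟪r, x i⟫ ^ 2 ≤ C ^ 2 * ‖r‖ ^ 2 := by
  set s := ∑ i, ⟪r, x i⟫ ^ 2
  have hs : 0 ≤ s := by positivity
  have hsqrt : √s ^ 2 ≤ ‖r‖ * C * √s := calc
    √s ^ 2 = ⟪r, ∑ i, ⟪r, x i⟫ • x i⟫ := by
      rw [Real.sq_sqrt hs]
      simp only [s, inner_sum, real_inner_smul_right, sq]
    _ ≤ ‖r‖ * ‖∑ i, ⟪r, x i⟫ • x i‖ := real_inner_le_norm _ _
    _ ≤ ‖r‖ * (C * √s) := mul_le_mul_of_nonneg_left (h _) (norm_nonneg r)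
    _ = ‖r‖ * C * √s := by ring
  rcases (Real.sqrt_nonneg s).eq_or_lt with h0 | hpos
  · nlinarith [Real.sqrt_eq_zero'.1 h0.symm, sq_nonneg (C * ‖r‖)]
  · have hle : √s ≤ ‖r‖ * C := le_of_mul_le_mul_right (by nlinarith) hpos
    calc s = √s ^ 2 := (Real.sq_sqrt hs).symm
      _ ≤ (‖r‖ * C) ^ 2 := pow_le_pow_left₀ (Real.sqrt_nonneg s) hle 2
      _ = C ^ 2 * ‖r‖ ^ 2 := by ring

theorem sq_mul_norm_sq_le_sum_inner_sq {c : ℝ} (hc : 0 ≤ c)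
    (h : ∀ w : ι → ℝ, c * √(∑ i, w i ^ 2) ≤ ‖∑ i, w i • x i‖) {r : E}
    (hr : r ∈ span ℝ (Set.range x)) :
    c ^ 2 * ‖r‖ ^ 2 ≤ ∑ i, ⟪r, x i⟫ ^ 2 := by
  obtain ⟨w, hw⟩ := (mem_span_range_iff_exists_fun ℝ).mp hr
  have hnorm : ‖r‖ ^ 2 = ∑ i, w i * ⟪r, x i⟫ := by
    rw [← real_inner_self_eq_norm_sq]
    nth_rw 2 [← hw]
    simp only [inner_sum, real_inner_smul_right]
  have hcs : (‖r‖ ^ 2) ^ 2 ≤ (∑ i, w i ^ 2) * ∑ i, ⟪r, x i⟫ ^ 2 :=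
    hnorm ▸ Finset.sum_mul_sq_le_sq_mul_sq _ _ _
  have hlow : c ^ 2 * ∑ i, w i ^ 2 ≤ ‖r‖ ^ 2 := by
    have := pow_le_pow_left₀ (by positivity) (h w) 2
    rwa [hw, mul_pow, Real.sq_sqrt (by positivity)] at this
  rcases eq_or_lt_of_le (by positivity : 0 ≤ ‖r‖ ^ 2) with h0 | hpos
  · rw [← h0, mul_zero]; positivity
  · refine le_of_mul_le_mul_left ?_ hpos
    nlinarith [mul_le_mul_of_nonneg_right hlow (by positivity : 0 ≤ ∑ i, ⟪r, x i⟫ ^ 2)]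

theorem linearIndependent_of_mul_sqrt_le_norm_sum_smul {c : ℝ} (hc : 0 < c)
    (h : ∀ w : ι → ℝ, c * √(∑ i, w i ^ 2) ≤ ‖∑ i, w i • x i‖) : LinearIndependent ℝ x := by
  refine Fintype.linearIndependent_iff.2 fun w hw i => ?_
  have hsqrt : √(∑ i, w i ^ 2) = 0 := by
    have := h w
    rw [hw, norm_zero] at this
    nlinarith [Real.sqrt_nonneg (∑ i, w i ^ 2)]
  rw [Real.sqrt_eq_zero (by positivity), Fintype.sum_eq_zero_iff_of_nonneg (fun _ => sq_nonneg _)]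
    at hsqrt
  exact pow_eq_zero_iff two_ne_zero |>.1 (congrFun hsqrt i)

end FrameBounds

theorem column_subset_selection_curvature_general
    (m n : ℕ) (x : Fin n → EuclideanSpace ℝ (Fin m))
    (σ₁ σ₂ : ℝ) (hσ₁ : 0 < σ₁)
    (hlower : ∀ w : Fin n → ℝ,
      σ₁ * Real.sqrt (∑ i : Fin n, (w i) ^ 2) ≤ ‖∑ i : Fin n, w i • x i‖)
    (hupper : ∀ w : Fin n → ℝ,
      ‖∑ i : Fin n, w i • x i‖ ≤ σ₂ * Real.sqrt (∑ i : Fin n, (w i) ^ 2))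
    (f : Finset (Fin n) → ℝ)
    (hf : ∀ S : Finset (Fin n), f S = ∑ j : Fin n,
      (Metric.infDist (x j)
        (Submodule.span ℝ (x '' ↑S) : Set (EuclideanSpace ℝ (Fin m)))) ^ 2)
    (j : Fin n) (S T : Finset (Fin n)) (hjS : j ∉ S) :
    (σ₁ ^ 2 / σ₂ ^ 2) * (f T - f (T ∪ {j})) ≤ f S - f (S ∪ {j}) := by
  set residual : Finset (Fin n) → EuclideanSpace ℝ (Fin m) :=
    fun U => x j - (span ℝ (x '' ↑U)).starProjection (x j)
  have hgain (U : Finset (Fin n)) :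
      f U - f (U ∪ {j}) = (∑ k, ⟪residual U, x k⟫ ^ 2) / ‖residual U‖ ^ 2 := by
    rw [hf, hf, Finset.coe_union, Finset.coe_singleton, Set.image_union, Set.image_singleton,
      span_union, ← Finset.sum_sub_distrib, Finset.sum_div]
    refine Finset.sum_congr rfl fun k _ => ?_
    rw [infDist_sq_sup_span_singleton]
    ring
  have hT : (∑ k, ⟪residual T, x k⟫ ^ 2) / ‖residual T‖ ^ 2 ≤ σ₂ ^ 2 :=
    div_le_of_le_mul₀ (sq_nonneg _) (sq_nonneg _) (sum_inner_sq_le_of_norm_sum_smul_le x hupper _)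
  have hS : σ₁ ^ 2 ≤ (∑ k, ⟪residual S, x k⟫ ^ 2) / ‖residual S‖ ^ 2 := by
    have hli := linearIndependent_of_mul_sqrt_le_norm_sum_smul x hσ₁ hlower
    have hne : residual S ≠ 0 := sub_ne_zero.2 fun h =>
      hli.notMem_span_image hjS (h ▸ starProjection_apply_mem _ _)
    have hmem : residual S ∈ span ℝ (Set.range x) :=
      sub_mem (subset_span ⟨j, rfl⟩)
        (span_mono (Set.image_subset_range _ _) (starProjection_apply_mem _ _))
    rw [le_div_iff₀ (by positivity)]
    exact sq_mul_norm_sq_le_sum_inner_sq x hσ₁.le hlower hmem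
  rw [hgain, hgain]
  calc σ₁ ^ 2 / σ₂ ^ 2 * ((∑ k, ⟪residual T, x k⟫ ^ 2) / ‖residual T‖ ^ 2)
      = σ₁ ^ 2 * ((∑ k, ⟪residual T, x k⟫ ^ 2) / ‖residual T‖ ^ 2 / σ₂ ^ 2) := by ring
    _ ≤ σ₁ ^ 2 * 1 := by gcongr; exact div_le_one_of_le₀ hT (sq_nonneg _)
    _ ≤ _ := by rw [mul_one]; exact hS

/-- Curvature bound for the column subset selection objective: if all singular values of
the matrix with columns `x i` lie in `[σ₁, σ₂]`, then for every `j` and all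
`S, T ⊆ [n] \ {j}`, `f S - f (S ∪ {j}) ≥ (σ₁²/σ₂²) * (f T - f (T ∪ {j}))`. -/
theorem column_subset_selection_curvature
    (m n : ℕ) (x : Fin n → EuclideanSpace ℝ (Fin m))
    (σ₁ σ₂ : ℝ) (hσ₁ : 0 < σ₁) (hσ₁₂ : σ₁ ≤ σ₂)
    (hlower : ∀ w : Fin n → ℝ,
      σ₁ * Real.sqrt (∑ i : Fin n, (w i) ^ 2) ≤ ‖∑ i : Fin n, w i • x i‖)
    (hupper : ∀ w : Fin n → ℝ,
      ‖∑ i : Fin n, w i • x i‖ ≤ σ₂ * Real.sqrt (∑ i : Fin n, (w i) ^ 2))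
    (f : Finset (Fin n) → ℝ)
    (hf : ∀ S : Finset (Fin n), f S = ∑ j : Fin n,
      (Metric.infDist (x j)
        (Submodule.span ℝ (x '' ↑S) : Set (EuclideanSpace ℝ (Fin m)))) ^ 2)
    (j : Fin n) (S T : Finset (Fin n)) (hjS : j ∉ S) (hjT : j ∉ T) :
    (σ₁ ^ 2 / σ₂ ^ 2) * (f T - f (T ∪ {j})) ≤ f S - f (S ∪ {j}) :=
  column_subset_selection_curvature_general m n x σ₁ σ₂ hσ₁ hlower hupper f hf j S T hjS
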